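/- Let α ∈ (0,1) and define h_α(m, n) = (c₆/(1−α)) m^α + c_n m² − c₆((2−α)/(1−α)) m − κ(n−6) and h₁(m, n) = c_n m² − c₆ m − c₆ m ln m − κ(n−6). Then for every m > 0 and n ≥ 3, |h_α(m, n) − h₁(m, n)| ≤ (c₆/2)(1 − α)(ln m)² max{1, m}. In particular, h_α converges to h₁ as α → 1⁻, locally uniformly in m and uniformly in n. -/

import Mathlib

open Real Set Filter

noncomputable def cFun (n : ℝ) : ℝ :=
  1 / (2 * n) * ((1 / 3) * Real.tan (π / n) + Real.cot (π / n))

noncomputable def c6 : ℝ := 5 / (18 * Real.sqrt 3)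

noncomputable def kappa : ℝ := 2 * π / 243 - 5 * Real.sqrt 3 / 324

noncomputable def hA (α m n : ℝ) : ℝ :=
  c6 / (1 - α) * m ^ α + cFun n * m ^ 2 - c6 * ((2 - α) / (1 - α)) * m - kappa * (n - 6)

noncomputable def h1 (m n : ℝ) : ℝ :=
  cFun n * m ^ 2 - c6 * m - c6 * m * Real.log m - kappa * (n - 6)

/-!
Writing `m ^ α = exp (α log m)`, Taylor's theorem with Lagrange remainder at `α = 1` gives
`m ^ α = m + (α - 1) m log m + (α - 1)² / 2 · (log m)² m ^ ξ` with `ξ` between `α` and `1`, and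
`m ^ ξ ≤ max 1 m`. Since `h_α - h₁` is `c₆ / (1 - α)` times this remainder, the bound follows; it is
`O(1 - α)` uniformly for `m` in a compact subinterval of `(0, ∞)` and all `n`.
-/

lemma abs_exp_sub_exp_sub_mul_exp_le (a b : ℝ) :
    |exp a - exp b - (a - b) * exp b| ≤ (a - b) ^ 2 / 2 * max (exp a) (exp b) := by
  rcases eq_or_ne b a with rfl | hba
  · simp
  obtain ⟨ξ, hξ, htaylor⟩ :=
    taylor_mean_remainder_lagrange_iteratedDeriv (n := 1) hba contDiff_exp.contDiffOn
  have hlinear : taylorWithinEval exp 1 (uIcc b a) b a = exp b + (a - b) * exp b := by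
    rw [taylorWithinEval_succ, taylor_within_zero_eval, iteratedDerivWithin_one,
      (hasDerivAt_exp b).hasDerivWithinAt.derivWithin (uniqueDiffOn_uIcc hba b left_mem_uIcc)]
    simp
  have hremainder : exp a - exp b - (a - b) * exp b = (a - b) ^ 2 / 2 * exp ξ := by
    rw [hlinear, iteratedDeriv_eq_iterate, iter_deriv_exp] at htaylor
    rw [sub_sub, htaylor]
    norm_num
    ring
  have hξmax : exp ξ ≤ max (exp a) (exp b) := by
    rw [← exp_monotone.map_max]
    exact exp_le_exp.2 (Ioo_subset_Icc_self hξ |>.2.trans (max_comm b a).le)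
  rw [hremainder, abs_of_nonneg (by positivity)]
  gcongr

lemma abs_rpow_sub_rpow_sub_mul_log_le {m : ℝ} (hm : 0 < m) (α β : ℝ) :
    |m ^ α - m ^ β - (α - β) * m ^ β * log m| ≤
      (α - β) ^ 2 / 2 * log m ^ 2 * max (m ^ α) (m ^ β) := by
  simp only [rpow_def_of_pos hm]
  convert abs_exp_sub_exp_sub_mul_exp_le (log m * α) (log m * β) using 2 <;> ring

lemma rpow_le_max_one_self {m α : ℝ} (hm : 0 ≤ m) (hα₀ : 0 ≤ α) (hα₁ : α ≤ 1) :
    m ^ α ≤ max 1 m := by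
  rcases le_total m 1 with h | h
  · exact (rpow_le_one hm h hα₀).trans (le_max_left _ _)
  · exact (rpow_le_rpow_of_exponent_le h hα₁).trans_eq (rpow_one m) |>.trans (le_max_right _ _)

lemma hA_sub_h1 {α : ℝ} (hα : α ≠ 1) (m n : ℝ) :
    hA α m n - h1 m n =
      c6 / (1 - α) * (m ^ α - m ^ (1 : ℝ) - (α - 1) * m ^ (1 : ℝ) * log m) := by
  have : 1 - α ≠ 0 := sub_ne_zero.2 hα.symm
  rw [hA, h1, rpow_one]
  field_simp
  ring

lemma c6_pos : 0 < c6 := by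
  unfold c6
  positivity

lemma abs_hA_sub_h1_le {α : ℝ} (hα : α ∈ Ioo (0 : ℝ) 1) {m : ℝ} (hm : 0 < m) (n : ℝ) :
    |hA α m n - h1 m n| ≤ c6 / 2 * (1 - α) * log m ^ 2 * max 1 m := by
  obtain ⟨hα₀, hα₁⟩ := hα
  have hpos : 0 < 1 - α := sub_pos.2 hα₁
  have hmax : max (m ^ α) (m ^ (1 : ℝ)) ≤ max 1 m :=
    max_le (rpow_le_max_one_self hm.le hα₀.le hα₁.le)
      (rpow_le_max_one_self hm.le zero_le_one le_rfl)
  calc |hA α m n - h1 m n|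
      = c6 / (1 - α) * |m ^ α - m ^ (1 : ℝ) - (α - 1) * m ^ (1 : ℝ) * log m| := by
        rw [hA_sub_h1 hα₁.ne, abs_mul, abs_of_pos (div_pos c6_pos hpos)]
    _ ≤ c6 / (1 - α) * ((α - 1) ^ 2 / 2 * log m ^ 2 * max 1 m) :=
        mul_le_mul_of_nonneg_left ((abs_rpow_sub_rpow_sub_mul_log_le hm α 1).trans (by gcongr))
          (div_pos c6_pos hpos).le
    _ = c6 / 2 * (1 - α) * log m ^ 2 * max 1 m := by
        field_simp
        ring

lemma tendstoUniformlyOn_of_dist_le {ι β α : Type*} [PseudoMetricSpace α] {F : ι → β → α}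
    {f : β → α} {l : Filter ι} {s : Set β} {u : ι → ℝ} (hu : Tendsto u l (nhds 0))
    (h : ∀ᶠ i in l, ∀ x ∈ s, dist (f x) (F i x) ≤ u i) : TendstoUniformlyOn F f l s :=
  Metric.tendstoUniformlyOn_iff.2 fun _ hε => (h.and (hu.eventually (gt_mem_nhds hε))).mono
    fun _ hi x hx => (hi.1 x hx).trans_lt hi.2

lemma sq_log_le_of_mem_Icc {m₁ m₂ m : ℝ} (hm₁ : 0 < m₁) (hm : m ∈ Icc m₁ m₂) :
    log m ^ 2 ≤ max |log m₁| |log m₂| ^ 2 := by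
  rw [← sq_abs (log m)]
  gcongr
  exact abs_le_max_abs_abs (log_le_log hm₁ hm.1) (log_le_log (hm₁.trans_le hm.1) hm.2)

/-- `|h_α(m,n) − h₁(m,n)| ≤ (c₆/2)(1−α)(ln m)² max{1,m}`; in particular `h_α → h₁`
as `α → 1⁻`, locally uniformly in `m` and uniformly in `n`. -/
theorem stmt9 :
    (∀ α ∈ Set.Ioo (0 : ℝ) 1, ∀ m : ℝ, 0 < m → ∀ n : ℝ, 3 ≤ n →
      |hA α m n - h1 m n| ≤ c6 / 2 * (1 - α) * (Real.log m) ^ 2 * max 1 m) ∧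
    (∀ m₁ m₂ : ℝ, 0 < m₁ → m₁ ≤ m₂ →
      TendstoUniformlyOn (fun (α : ℝ) (p : ℝ × ℝ) => hA α p.1 p.2)
        (fun p : ℝ × ℝ => h1 p.1 p.2) (nhdsWithin 1 (Set.Iio 1))
        (Set.Icc m₁ m₂ ×ˢ Set.Ici 3)) := by
  refine ⟨fun α hα m hm n _ => abs_hA_sub_h1_le hα hm n, fun m₁ m₂ hm₁ _ => ?_⟩
  set C := c6 / 2 * max |log m₁| |log m₂| ^ 2 * max 1 m₂
  have hC : Tendsto (fun α : ℝ => (1 - α) * C) (nhdsWithin 1 (Iio 1)) (nhds 0) :=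
    tendsto_nhdsWithin_of_tendsto_nhds <|
      ((continuous_const.sub continuous_id).mul continuous_const).tendsto' 1 0 (by simp)
  refine tendstoUniformlyOn_of_dist_le hC ?_
  filter_upwards [Ioo_mem_nhdsLT zero_lt_one] with α hα p ⟨hp, _⟩
  have hm : 0 < p.1 := hm₁.trans_le hp.1
  have hcoeff : 0 ≤ c6 / 2 * (1 - α) := mul_nonneg (half_pos c6_pos).le (sub_nonneg.2 hα.2.le)
  calc dist (h1 p.1 p.2) (hA α p.1 p.2)
      ≤ c6 / 2 * (1 - α) * log p.1 ^ 2 * max 1 p.1 := by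
        rw [dist_comm, dist_eq]
        exact abs_hA_sub_h1_le hα hm p.2
    _ ≤ c6 / 2 * (1 - α) * max |log m₁| |log m₂| ^ 2 * max 1 m₂ :=
        mul_le_mul (mul_le_mul_of_nonneg_left (sq_log_le_of_mem_Icc hm₁ hp) hcoeff)
          (max_le_max le_rfl hp.2) (by positivity) (by positivity)
    _ = (1 - α) * C := by ring
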